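/- Define J_{n:-m}(a) = (Re(w), −Im(w), (|a₁|²/m + |a₂|²/n)/2) with w = a₁^m·conj(a₂)^n/(√(nm)·|a₁|^{m-1}·|a₂|^{n-1}), and R_{n:-m}(a) = (|a₁|²/m − |a₂|²/n)/2, for a₁, a₂ ∈ ℂ×. Then μ₃² − μ₁² − μ₂² = R_{n:-m}(a)² where (μ₁,μ₂,μ₃) = J_{n:-m}(a). -/

import Mathlib

/-- `J_{n:-m}` viewed as a map to ℝ³. -/
noncomputable def Jnmm (n m : ℕ) (a : ℂ × ℂ) : ℝ × ℝ × ℝ :=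
  let w : ℂ := a.1 ^ m * ((starRingEnd ℂ) a.2) ^ n
    / ((Real.sqrt (n * m) : ℂ) * (‖a.1‖ : ℂ) ^ (m - 1)
        * (‖a.2‖ : ℂ) ^ (n - 1))
  (w.re, -w.im, (‖a.1‖ ^ 2 / m + ‖a.2‖ ^ 2 / n) / 2)

/-- `R_{n:-m}`. -/
noncomputable def Rnmm (n m : ℕ) (a : ℂ × ℂ) : ℝ :=
  (‖a.1‖ ^ 2 / m - ‖a.2‖ ^ 2 / n) / 2

/-! With `x = |a₁|²/m` and `y = |a₂|²/n`, the first two coordinates of `J_{n:-m}(a)` are the real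
and imaginary parts of a complex number `w` with `|w| = |a₁||a₂|/√(nm)`, so `μ₁² + μ₂² = x y`,
while `μ₃ = (x + y)/2` and `R = (x - y)/2`; the claim is `((x + y)/2)² - x y = ((x - y)/2)²`. -/

-- The cases `m = 0` and `r = 0` hold through the convention `x / 0 = 0`.
theorem sq_pow_div_pow_pred_div_natCast {K : Type*} [Field K] (r : K) (m : ℕ) :
    (r ^ m / r ^ (m - 1)) ^ 2 / m = r ^ 2 / m := by
  rcases m with _ | k
  · simp
  rcases eq_or_ne r 0 with rfl | hr
  · simp
  · rw [Nat.add_sub_cancel, pow_succ r k, mul_div_cancel_left₀ r (pow_ne_zero k hr)]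

theorem Jnmm_fst_sq_add_snd_fst_sq (n m : ℕ) (a : ℂ × ℂ) :
    (Jnmm n m a).1 ^ 2 + (Jnmm n m a).2.1 ^ 2 = ‖a.1‖ ^ 2 / m * (‖a.2‖ ^ 2 / n) := by
  set w : ℂ := a.1 ^ m * (starRingEnd ℂ a.2) ^ n
    / ((Real.sqrt (n * m) : ℂ) * (‖a.1‖ : ℂ) ^ (m - 1) * (‖a.2‖ : ℂ) ^ (n - 1))
  have hnorm : ‖w‖ = ‖a.1‖ ^ m / ‖a.1‖ ^ (m - 1) * (‖a.2‖ ^ n / ‖a.2‖ ^ (n - 1))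
      / Real.sqrt (n * m) := by
    simp only [w, norm_div, norm_mul, norm_pow, Complex.norm_conj, Complex.norm_real,
      Real.norm_eq_abs, abs_norm, abs_of_nonneg (Real.sqrt_nonneg _)]
    ring
  calc (Jnmm n m a).1 ^ 2 + (Jnmm n m a).2.1 ^ 2 = ‖w‖ ^ 2 := by
        rw [Complex.sq_norm, Complex.normSq_apply]
        simp only [Jnmm, w]
        ring
    _ = (‖a.1‖ ^ m / ‖a.1‖ ^ (m - 1)) ^ 2 / m * ((‖a.2‖ ^ n / ‖a.2‖ ^ (n - 1)) ^ 2 / n) := by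
        rw [hnorm, div_pow, Real.sq_sqrt (by positivity)]
        ring
    _ = ‖a.1‖ ^ 2 / m * (‖a.2‖ ^ 2 / n) := by
        rw [sq_pow_div_pow_pred_div_natCast, sq_pow_div_pow_pred_div_natCast]

theorem stmt_13_general (n m : ℕ)
    (a : ℂ × ℂ) :
    (Jnmm n m a).2.2 ^ 2 - (Jnmm n m a).1 ^ 2 - (Jnmm n m a).2.1 ^ 2
      = Rnmm n m a ^ 2 := by
  rw [sub_sub, Jnmm_fst_sq_add_snd_fst_sq]
  simp only [Jnmm, Rnmm]
  ring

theorem stmt_13 (n m : ℕ) (hn : 1 ≤ n) (hm : 1 ≤ m)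
    (a : ℂ × ℂ) (h₁ : a.1 ≠ 0) (h₂ : a.2 ≠ 0) :
    (Jnmm n m a).2.2 ^ 2 - (Jnmm n m a).1 ^ 2 - (Jnmm n m a).2.1 ^ 2
      = Rnmm n m a ^ 2 :=
  stmt_13_general n m a
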